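/- Let $p\in(1,\infty)$, $\theta\in(d-1,d-1+p)$, $\alpha\in(0,1)$, and $y_1\in[0,1]$. Suppose $u\in C^\infty_{loc}(\overline{\mathbb{R}^{d+1}_+})$ satisfies the estimate $\|Du\|_{C^{\alpha/2,\alpha}(Q_2^+)}\le C_1\|u\|_{L_p(Q_4^+)}$ (as holds for solutions of $u_t-a_{ij}(t)D_{ij}u=0$ in $Q_4^+$ with $u=0$ on $\{x_1=0\}$), and that $u=0$ on $\{x_1=0\}$. Then for any $r<1$, $$\dashint_{Q_r^+(y_1)}\Big|Du-\dashint_{Q_r^+(y_1)}Du\,d\mu\Big|^p d\mu \le C\,r^{\alpha p}\int_{Q_4^+}|D_1u|^p\,\mu(dx\,dt),$$ where $\mu(dx\,dt)=x_1^{\theta-d}dx\,dt$, $Q_r^+(y_1)=Q_r(0,y_1,0)\cap\{x_1>0\}$, and $C$ depends on $d,p,\theta,\alpha,C_1$. -/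

import Mathlib

open MeasureTheory
open ENNReal NNReal

noncomputable section

/-- The half parabolic cylinder `Q_r^+(y₁) = (-r²,0) × ((y₁-r,y₁+r) ∩ (0,∞)) × B'_r(0)`
in `ℝ^{d+1} = ℝ × ℝ × ℝ^{d-1}`. -/
def QPlus (d : ℕ) (r y₁ : ℝ) : Set (ℝ × ℝ × EuclideanSpace ℝ (Fin (d - 1))) :=
  Set.Ioo (-(r ^ 2)) 0 ×ˢ
    ((Set.Ioo (y₁ - r) (y₁ + r) ∩ Set.Ioi 0) ×ˢ
      Metric.ball (0 : EuclideanSpace ℝ (Fin (d - 1))) r)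

/-- The spatial gradient `Du` of `u(t,·)`. -/
def sGrad (d : ℕ) (u : ℝ × ℝ × EuclideanSpace ℝ (Fin (d - 1)) → ℝ)
    (z : ℝ × ℝ × EuclideanSpace ℝ (Fin (d - 1))) :=
  fderiv ℝ (fun x : ℝ × EuclideanSpace ℝ (Fin (d - 1)) => u (z.1, x)) z.2

/-- The weighted measure `μ(dz) = x₁^{θ-d} dx dt` on `ℝ^{d+1}`. -/
def wμ (d : ℕ) (θ : ℝ) : Measure (ℝ × ℝ × EuclideanSpace ℝ (Fin (d - 1))) :=
  volume.withDensity fun z => ENNReal.ofReal (z.2.1 ^ (θ - (d : ℝ)))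

lemma sGrad_eq {d : ℕ} {u : ℝ × ℝ × EuclideanSpace ℝ (Fin (d - 1)) → ℝ} (hu : ContDiff ℝ (⊤ : ℕ∞) u)
    (z : ℝ × ℝ × EuclideanSpace ℝ (Fin (d - 1))) :
    sGrad d u z = (fderiv ℝ u z).comp
      (ContinuousLinearMap.inr ℝ ℝ (ℝ × EuclideanSpace ℝ (Fin (d - 1)))) := by
  have hF : HasFDerivAt (fun x : ℝ × EuclideanSpace ℝ (Fin (d - 1)) => ((z.1 : ℝ), x))
      (ContinuousLinearMap.inr ℝ ℝ (ℝ × EuclideanSpace ℝ (Fin (d - 1)))) z.2 := by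
    have h : HasFDerivAt (fun x : ℝ × EuclideanSpace ℝ (Fin (d - 1)) => ((z.1 : ℝ), x))
        (((0 : (ℝ × EuclideanSpace ℝ (Fin (d - 1))) →L[ℝ] ℝ)).prod
          (ContinuousLinearMap.id ℝ (ℝ × EuclideanSpace ℝ (Fin (d - 1))))) z.2 :=
      HasFDerivAt.prodMk (hasFDerivAt_const z.1 z.2) (hasFDerivAt_id z.2)
    convert h using 2
    exact ContinuousLinearMap.ext fun x => by simp
  have hu' : HasFDerivAt u (fderiv ℝ u z) (z.1, z.2) := by
    rw [Prod.mk.eta]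
    exact (hu.differentiable (by simp) z).hasFDerivAt
  exact (hu'.comp z.2 hF).fderiv

lemma sGrad_cont {d : ℕ} {u : ℝ × ℝ × EuclideanSpace ℝ (Fin (d - 1)) → ℝ} (hu : ContDiff ℝ (⊤ : ℕ∞) u) :
    Continuous (sGrad d u) := by
  have h : sGrad d u = fun z => (fderiv ℝ u z).comp
      (ContinuousLinearMap.inr ℝ ℝ (ℝ × EuclideanSpace ℝ (Fin (d - 1)))) :=
    funext fun z => sGrad_eq hu z
  rw [h]
  exact (hu.continuous_fderiv (by simp)).clm_comp continuous_const

lemma hasDerivAt_D1 {d : ℕ} {u : ℝ × ℝ × EuclideanSpace ℝ (Fin (d - 1)) → ℝ} (hu : ContDiff ℝ (⊤ : ℕ∞) u)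
    (t : ℝ) (x' : EuclideanSpace ℝ (Fin (d - 1))) (s : ℝ) :
    HasDerivAt (fun s => u (t, s, x'))
      (sGrad d u (t, s, x') ((1 : ℝ), (0 : EuclideanSpace ℝ (Fin (d - 1))))) s := by
  have hF : HasDerivAt (fun s : ℝ => ((s : ℝ), x'))
      ((1 : ℝ), (0 : EuclideanSpace ℝ (Fin (d - 1)))) s :=
    HasDerivAt.prodMk (hasDerivAt_id s) (hasDerivAt_const s x')
  have hout : HasFDerivAt (fun x : ℝ × EuclideanSpace ℝ (Fin (d - 1)) => u (t, x))
      (sGrad d u (t, s, x')) (s, x') := by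
    have hQ : ContDiff ℝ (⊤ : ℕ∞) (fun x : ℝ × EuclideanSpace ℝ (Fin (d - 1)) => u (t, x)) :=
      hu.comp (contDiff_const.prodMk contDiff_id)
    exact (hQ.differentiable (by simp) (s, x')).hasFDerivAt
  exact hout.comp_hasDerivAt s hF

lemma lint_rpow_fin {e : ℝ} (he : -1 < e) :
    ∫⁻ s in Set.Ioc (0:ℝ) 4, ENNReal.ofReal (s ^ e) < ⊤ := by
  have hint : IntervalIntegrable (fun s : ℝ => s ^ e) volume 0 4 :=
    intervalIntegral.intervalIntegrable_rpow' he
  have h2 : IntegrableOn (fun s : ℝ => s ^ e) (Set.Ioc 0 4) volume := hint.1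
  have h3 := h2.2
  rwa [hasFiniteIntegral_iff_ofReal] at h3
  exact (ae_restrict_iff' measurableSet_Ioc).mpr
    (Filter.Eventually.of_forall fun s hs => Real.rpow_nonneg hs.1.le e)

lemma holder_bound {p β : ℝ} (hp : 1 < p) {g : ℝ → ℝ} (hg : Continuous g)
    {x₁ : ℝ} (h0 : 0 < x₁) (h4 : x₁ ≤ 4) :
    ENNReal.ofReal (|∫ s in (0:ℝ)..x₁, g s| ^ p) ≤
      (∫⁻ s in Set.Ioc (0:ℝ) 4, ENNReal.ofReal (|g s| ^ p * s ^ β)) *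
        (∫⁻ s in Set.Ioc (0:ℝ) 4, ENNReal.ofReal (s ^ (-β / (p - 1)))) ^ (p - 1) := by
  have hp0 : 0 < p := by linarith
  have hp1 : (0:ℝ) < p - 1 := by linarith
  have hq : p.HolderConjugate (p / (p - 1)) := Real.HolderConjugate.conjExponent hp
  set q : ℝ := p / (p - 1) with hqdef
  have hq0 : 0 < q := hq.symm.pos
  set S : ℝ≥0∞ := ∫⁻ s in Set.Ioc (0:ℝ) 4, ENNReal.ofReal (|g s| ^ p * s ^ β) with hS
  set T : ℝ≥0∞ := ∫⁻ s in Set.Ioc (0:ℝ) 4, ENNReal.ofReal (s ^ (-β / (p - 1))) with hT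
  set F : ℝ → ℝ≥0∞ := fun s => ENNReal.ofReal (|g s| * s ^ (β / p)) with hF
  set G : ℝ → ℝ≥0∞ := fun s => ENNReal.ofReal (s ^ (-β / p)) with hG
  have h1 : ENNReal.ofReal |∫ s in (0:ℝ)..x₁, g s| ≤
      ∫⁻ s in Set.Ioc (0:ℝ) x₁, ENNReal.ofReal |g s| := by
    have hle : |∫ s in (0:ℝ)..x₁, g s| ≤ ∫ s in Set.Ioc (0:ℝ) x₁, |g s| := by
      calc |∫ s in (0:ℝ)..x₁, g s| ≤ ∫ s in (0:ℝ)..x₁, |g s| :=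
            intervalIntegral.abs_integral_le_integral_abs h0.le
        _ = ∫ s in Set.Ioc (0:ℝ) x₁, |g s| := intervalIntegral.integral_of_le h0.le
    refine le_trans (ENNReal.ofReal_le_ofReal hle) ?_
    rw [ofReal_integral_eq_lintegral_ofReal (hg.abs.intervalIntegrable 0 x₁).1
      (Filter.Eventually.of_forall fun s => abs_nonneg _)]
  have h2 : ∫⁻ s in Set.Ioc (0:ℝ) x₁, ENNReal.ofReal |g s| =
      ∫⁻ s in Set.Ioc (0:ℝ) x₁, (F * G) s := by
    refine setLIntegral_congr_fun measurableSet_Ioc (fun s hs => ?_)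
    have hs0 : (0:ℝ) < s := hs.1
    simp only [Pi.mul_apply, hF, hG]
    rw [← ENNReal.ofReal_mul (mul_nonneg (abs_nonneg _) (Real.rpow_nonneg hs0.le _)),
      mul_assoc, ← Real.rpow_add hs0, neg_div, add_neg_cancel, Real.rpow_zero, mul_one]
  have hFm : AEMeasurable F (volume.restrict (Set.Ioc (0:ℝ) x₁)) :=
    ((hg.abs.measurable.mul (measurable_id.pow_const (β / p))).ennreal_ofReal).aemeasurable
  have hGm : AEMeasurable G (volume.restrict (Set.Ioc (0:ℝ) x₁)) :=
    ((measurable_id.pow_const (-β / p)).ennreal_ofReal).aemeasurable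
  have holder := ENNReal.lintegral_mul_le_Lp_mul_Lq (volume.restrict (Set.Ioc (0:ℝ) x₁)) hq hFm hGm
  have hFp : ∫⁻ s in Set.Ioc (0:ℝ) x₁, F s ^ p =
      ∫⁻ s in Set.Ioc (0:ℝ) x₁, ENNReal.ofReal (|g s| ^ p * s ^ β) := by
    refine setLIntegral_congr_fun measurableSet_Ioc (fun s hs => ?_)
    have hs0 : (0:ℝ) < s := hs.1
    rw [hF, ENNReal.ofReal_rpow_of_nonneg
        (mul_nonneg (abs_nonneg _) (Real.rpow_nonneg hs0.le _)) hp0.le,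
      Real.mul_rpow (abs_nonneg _) (Real.rpow_nonneg hs0.le _), ← Real.rpow_mul hs0.le,
      div_mul_cancel₀ β hp0.ne']
  have hGq : ∫⁻ s in Set.Ioc (0:ℝ) x₁, G s ^ q =
      ∫⁻ s in Set.Ioc (0:ℝ) x₁, ENNReal.ofReal (s ^ (-β / (p - 1))) := by
    refine setLIntegral_congr_fun measurableSet_Ioc (fun s hs => ?_)
    have hs0 : (0:ℝ) < s := hs.1
    rw [hG, ENNReal.ofReal_rpow_of_nonneg (Real.rpow_nonneg hs0.le _) hq0.le,
      ← Real.rpow_mul hs0.le, show -β / p * q = -β / (p - 1) by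
        rw [hqdef]; field_simp]
  have hmono1 : ∫⁻ s in Set.Ioc (0:ℝ) x₁, ENNReal.ofReal (|g s| ^ p * s ^ β) ≤ S :=
    lintegral_mono_set (Set.Ioc_subset_Ioc le_rfl h4)
  have hmono2 : ∫⁻ s in Set.Ioc (0:ℝ) x₁, ENNReal.ofReal (s ^ (-β / (p - 1))) ≤ T :=
    lintegral_mono_set (Set.Ioc_subset_Ioc le_rfl h4)
  have hbig : ENNReal.ofReal |∫ s in (0:ℝ)..x₁, g s| ≤ S ^ (1/p) * T ^ (1/q) := by
    refine le_trans h1 ?_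
    rw [h2]
    refine le_trans holder ?_
    gcongr
    · rw [hFp] at *; exact hmono1
    · rw [hGq] at *; exact hmono2
  calc ENNReal.ofReal (|∫ s in (0:ℝ)..x₁, g s| ^ p)
      = (ENNReal.ofReal |∫ s in (0:ℝ)..x₁, g s|) ^ p := by
        rw [ENNReal.ofReal_rpow_of_nonneg (abs_nonneg _) hp0.le]
    _ ≤ (S ^ (1/p) * T ^ (1/q)) ^ p := ENNReal.rpow_le_rpow hbig hp0.le
    _ = S * T ^ (p - 1) := by
        rw [ENNReal.mul_rpow_of_nonneg _ _ hp0.le, ← ENNReal.rpow_mul, ← ENNReal.rpow_mul,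
          one_div_mul_cancel hp0.ne', ENNReal.rpow_one]
        congr 2
        rw [hqdef]
        field_simp

lemma lint3 {d : ℕ} (f : ℝ × ℝ × EuclideanSpace ℝ (Fin (d - 1)) → ℝ≥0∞) (hf : Measurable f)
    (S A : Set ℝ) (B : Set (EuclideanSpace ℝ (Fin (d - 1)))) :
    ∫⁻ z in S ×ˢ A ×ˢ B, f z = ∫⁻ t in S, ∫⁻ x₁ in A, ∫⁻ x' in B, f (t, x₁, x') := by
  have e1 : (volume : Measure (ℝ × ℝ × EuclideanSpace ℝ (Fin (d - 1)))).restrict (S ×ˢ A ×ˢ B)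
      = ((volume : Measure ℝ).restrict S).prod
          ((volume : Measure (ℝ × EuclideanSpace ℝ (Fin (d - 1)))).restrict (A ×ˢ B)) := by
    rw [Measure.volume_eq_prod, Measure.prod_restrict]
  have e2 : (volume : Measure (ℝ × EuclideanSpace ℝ (Fin (d - 1)))).restrict (A ×ˢ B)
      = ((volume : Measure ℝ).restrict A).prod
          ((volume : Measure (EuclideanSpace ℝ (Fin (d - 1)))).restrict B) := by
    rw [Measure.volume_eq_prod, Measure.prod_restrict]
  rw [e1, lintegral_prod _ hf.aemeasurable]
  refine lintegral_congr fun t => ?_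
  rw [e2]
  exact lintegral_prod (fun y => f (t, y)) ((hf.comp measurable_prodMk_left).aemeasurable)

lemma QPlus_mono {d : ℕ} {r₁ y₁ r₂ : ℝ} (h0 : 0 < r₁) (h1 : r₁ ≤ r₂) (hy : 0 ≤ y₁)
    (hy2 : y₁ + r₁ ≤ r₂) : QPlus d r₁ y₁ ⊆ QPlus d r₂ 0 := by
  rintro ⟨t, x₁, x'⟩ ⟨ht, ⟨hx1, hx1'⟩, hx'⟩
  have hr2 : r₁ ^ 2 ≤ r₂ ^ 2 := by nlinarith
  have ht1 : -(r₁ ^ 2) < t := ht.1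
  have ht2 : t < 0 := ht.2
  have hx1a : y₁ - r₁ < x₁ := hx1.1
  have hx1b : x₁ < y₁ + r₁ := hx1.2
  have hx1c : (0:ℝ) < x₁ := hx1'
  refine ⟨⟨by linarith, ht2⟩, ⟨⟨by linarith, by linarith⟩, hx1c⟩, ?_⟩
  exact Metric.ball_subset_ball (by linarith) hx'

set_option maxHeartbeats 2000000 in
/-- Mean oscillation estimate for `Du`: suppose `u` is smooth, vanishes on `{x₁ = 0}`,
and satisfies the parabolic Hölder estimate
`‖Du‖_{C^{α/2,α}(Q_2^+)} ≤ C₁ ‖u‖_{L_p(Q_4^+)}`. Then for `y₁ ∈ [0,1]` and `r < 1`,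
the `p`-th weighted mean oscillation of `Du` over `Q_r^+(y₁)` is bounded by
`C r^{αp} ∫_{Q_4^+} |D₁u|^p dμ`, with `C = C(d,p,θ,α,C₁)`. -/
theorem stmt_8 (d : ℕ) (hd : 1 ≤ d) (p θ α : ℝ) (hp : 1 < p)
    (hθ₁ : (d : ℝ) - 1 < θ) (hθ₂ : θ < (d : ℝ) - 1 + p) (hα : α ∈ Set.Ioo (0 : ℝ) 1)
    (C₁ : ℝ) (hC₁ : 0 ≤ C₁) :
    ∃ C : ℝ, 0 < C ∧ ∀ (u : ℝ × ℝ × EuclideanSpace ℝ (Fin (d - 1)) → ℝ),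
      ContDiff ℝ (⊤ : ℕ∞) u →
      (∀ t x', u (t, 0, x') = 0) →
      (∀ X ∈ QPlus d 2 0, ‖sGrad d u X‖ ≤
        C₁ * (∫ z in QPlus d 4 0, |u z| ^ p) ^ (1 / p)) →
      (∀ X ∈ QPlus d 2 0, ∀ Y ∈ QPlus d 2 0, ‖sGrad d u X - sGrad d u Y‖ ≤
        C₁ * (∫ z in QPlus d 4 0, |u z| ^ p) ^ (1 / p) *
          (|X.1 - Y.1| ^ (α / 2) + dist X.2 Y.2 ^ α)) →
      ∀ r y₁ : ℝ, 0 < r → r < 1 → y₁ ∈ Set.Icc (0 : ℝ) 1 →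
        (⨍ z in QPlus d r y₁,
            ‖sGrad d u z - ⨍ w in QPlus d r y₁, sGrad d u w ∂(wμ d θ)‖ ^ p ∂(wμ d θ)) ≤
          C * r ^ (α * p) *
            ∫ z in QPlus d 4 0, |sGrad d u z (1, 0)| ^ p ∂(wμ d θ) := by
  obtain ⟨hα0, hα1⟩ := hα
  have hp0 : (0:ℝ) < p := by linarith
  have hp1 : (0:ℝ) < p - 1 := by linarith
  set β : ℝ := θ - (d:ℝ) with hβdef
  have hβ1 : (-1:ℝ) < β := by rw [hβdef]; linarith
  have hβ2 : β < p - 1 := by rw [hβdef]; linarith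
  set δ : ℝ := -β / (p - 1) with hδdef
  have hδ : (-1:ℝ) < δ := by
    rw [hδdef, lt_div_iff₀ hp1]
    linarith
  set T : ℝ≥0∞ := ∫⁻ s in Set.Ioc (0:ℝ) 4, ENNReal.ofReal (s ^ δ) with hTdef
  have hT : T ≠ ⊤ := (lint_rpow_fin hδ).ne
  have hTp : T ^ (p-1) ≠ ⊤ := ENNReal.rpow_ne_top_of_nonneg (by linarith) hT
  set CH : ℝ≥0∞ := 8 * T ^ (p - 1) with hCHdef
  have hCH : CH ≠ ⊤ := ENNReal.mul_ne_top (by norm_num) hTp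
  refine ⟨3 ^ p * C₁ ^ p * CH.toReal + 1, by positivity, ?_⟩
  intro u hu hu0 hB hO r y₁ hr0 hr1 hy
  -- basic set facts
  have hQmeas : ∀ r' y' : ℝ, MeasurableSet (QPlus d r' y') := fun r' y' =>
    measurableSet_Ioo.prod ((measurableSet_Ioo.inter measurableSet_Ioi).prod
      measurableSet_ball)
  have hQrQ2 : QPlus d r y₁ ⊆ QPlus d 2 0 :=
    QPlus_mono hr0 (by linarith) hy.1 (by have := hy.2; linarith)
  have hQ2Q4 : QPlus d 2 0 ⊆ QPlus d 4 0 :=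
    QPlus_mono (by norm_num) (by norm_num) le_rfl (by norm_num)
  have hQrQ4 : QPlus d r y₁ ⊆ QPlus d 4 0 := fun z hz => hQ2Q4 (hQrQ2 hz)
  have hwμ : wμ d θ = volume.withDensity
      (fun z : ℝ × ℝ × EuclideanSpace ℝ (Fin (d - 1)) => ENNReal.ofReal (z.2.1 ^ β)) := rfl
  have hw : Measurable
      (fun z : ℝ × ℝ × EuclideanSpace ℝ (Fin (d - 1)) => ENNReal.ofReal (z.2.1 ^ β)) :=
    ((measurable_snd.fst).pow_const β).ennreal_ofReal
  -- the three factor sets of Q4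
  set S4 : Set ℝ := Set.Ioo (-(4 ^ 2 : ℝ)) 0 with hS4def
  set A4 : Set ℝ := Set.Ioo ((0:ℝ) - 4) (0 + 4) ∩ Set.Ioi 0 with hA4def
  set B4 : Set (EuclideanSpace ℝ (Fin (d - 1))) := Metric.ball 0 4 with hB4def
  have hQ4eq : QPlus d 4 0 = S4 ×ˢ A4 ×ˢ B4 := rfl
  have hA4Ioo : A4 = Set.Ioo (0:ℝ) 4 := by
    rw [hA4def]
    ext x
    simp only [Set.mem_inter_iff, Set.mem_Ioo, Set.mem_Ioi]
    constructor
    · rintro ⟨⟨_, h⟩, h0⟩; exact ⟨h0, by linarith⟩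
    · rintro ⟨h0, h4⟩; exact ⟨⟨by linarith, by linarith⟩, h0⟩
  have hA4sub : A4 ⊆ Set.Ioc (0:ℝ) 4 := by
    rw [hA4Ioo]; exact Set.Ioo_subset_Ioc_self
  have hA4fin : volume A4 ≤ 8 := by
    rw [hA4Ioo, Real.volume_Ioo]
    rw [show ((8:ℝ≥0∞) = ENNReal.ofReal 8) by norm_num]
    exact ENNReal.ofReal_le_ofReal (by norm_num)
  have hA4m : MeasurableSet A4 := measurableSet_Ioo.inter measurableSet_Ioi
  have hQ4m : MeasurableSet (QPlus d 4 0) := hQmeas 4 0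
  -- finiteness of the weighted measure of Q4
  have hwQ4 : wμ d θ (QPlus d 4 0) ≠ ⊤ := by
    rw [hwμ, withDensity_apply _ hQ4m, hQ4eq, lint3 _ hw]
    have hvB : volume B4 ≠ ⊤ := measure_ball_lt_top.ne
    have hfin : (∫⁻ x₁ in Set.Ioc (0:ℝ) 4, ENNReal.ofReal (x₁ ^ β)) ≠ ⊤ := (lint_rpow_fin hβ1).ne
    have hstep : ∀ t : ℝ, (∫⁻ x₁ in A4, ∫⁻ x' in B4,
        ENNReal.ofReal (((t, x₁, x') : ℝ × ℝ × EuclideanSpace ℝ (Fin (d - 1))).2.1 ^ β)) ≤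
        (∫⁻ x₁ in Set.Ioc (0:ℝ) 4, ENNReal.ofReal (x₁ ^ β)) * volume B4 := by
      intro t
      calc (∫⁻ x₁ in A4, ∫⁻ _ in B4, ENNReal.ofReal (x₁ ^ β))
          = ∫⁻ x₁ in A4, ENNReal.ofReal (x₁ ^ β) * volume B4 :=
            lintegral_congr fun x₁ => setLIntegral_const _ _
        _ = (∫⁻ x₁ in A4, ENNReal.ofReal (x₁ ^ β)) * volume B4 :=
            lintegral_mul_const' _ _ hvB
        _ ≤ _ := by
            gcongr
    refine ne_top_of_le_ne_top ?_ (lintegral_mono fun t => hstep t)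
    rw [setLIntegral_const]
    exact ENNReal.mul_ne_top (ENNReal.mul_ne_top hfin hvB) (by simp [hS4def, Real.volume_Ioo])
  have hwQr : wμ d θ (QPlus d r y₁) ≠ ⊤ :=
    ne_top_of_le_ne_top hwQ4 (measure_mono hQrQ4)
  -- abbreviations
  have hD1c : Continuous fun z : ℝ × ℝ × EuclideanSpace ℝ (Fin (d - 1)) =>
      sGrad d u z (1, 0) := (sGrad_cont hu).clm_apply continuous_const
  have hupC : Continuous fun z : ℝ × ℝ × EuclideanSpace ℝ (Fin (d - 1)) => |u z| ^ p :=
    (hu.continuous.abs).rpow_const (fun _ => Or.inr hp0.le)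
  have hD1pC : Continuous fun z : ℝ × ℝ × EuclideanSpace ℝ (Fin (d - 1)) =>
      |sGrad d u z (1, 0)| ^ p :=
    (hD1c.abs).rpow_const (fun _ => Or.inr hp0.le)
  set J : ℝ := ∫ z in QPlus d 4 0, |sGrad d u z (1, 0)| ^ p ∂(wμ d θ) with hJdef
  set I : ℝ := ∫ z in QPlus d 4 0, |u z| ^ p with hIdef
  have hI0 : 0 ≤ I := setIntegral_nonneg hQ4m fun z _ => Real.rpow_nonneg (abs_nonneg _) p
  have hJ0 : 0 ≤ J := integral_nonneg fun z => Real.rpow_nonneg (abs_nonneg _) p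
  set Ilin : ℝ≥0∞ := ∫⁻ z in QPlus d 4 0, ENNReal.ofReal (|u z| ^ p) with hIlindef
  set Jlin : ℝ≥0∞ :=
    ∫⁻ z in QPlus d 4 0, ENNReal.ofReal (|sGrad d u z (1, 0)| ^ p) ∂(wμ d θ) with hJlindef
  have hIlin : I = Ilin.toReal := by
    rw [hIdef, integral_eq_lintegral_of_nonneg_ae
      (Filter.Eventually.of_forall fun z => Real.rpow_nonneg (abs_nonneg _) p)
      hupC.aestronglyMeasurable.restrict]
  have hJlin : J = Jlin.toReal := by
    rw [hJdef, integral_eq_lintegral_of_nonneg_ae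
      (Filter.Eventually.of_forall fun z => Real.rpow_nonneg (abs_nonneg _) p)
      hD1pC.aestronglyMeasurable.restrict]
  have hD1pm : Measurable fun z : ℝ × ℝ × EuclideanSpace ℝ (Fin (d - 1)) =>
      ENNReal.ofReal (|sGrad d u z (1, 0)| ^ p) := hD1pC.measurable.ennreal_ofReal
  have hJconv : Jlin = ∫⁻ z in QPlus d 4 0,
      ENNReal.ofReal (z.2.1 ^ β) * ENNReal.ofReal (|sGrad d u z (1, 0)| ^ p) := by
    rw [hJlindef, hwμ, restrict_withDensity hQ4m,
      lintegral_withDensity_eq_lintegral_mul _ hw hD1pm]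
    rfl
  -- finiteness of Jlin
  have hJfin : Jlin ≠ ⊤ := by
    set K : Set (ℝ × ℝ × EuclideanSpace ℝ (Fin (d - 1))) :=
      Set.Icc (-(16:ℝ)) 0 ×ˢ (Set.Icc (-4:ℝ) 4 ×ˢ Metric.closedBall 0 4) with hK
    have hKc : IsCompact K :=
      (isCompact_Icc.prod (isCompact_Icc.prod (isCompact_closedBall _ _)))
    have hsubK : QPlus d 4 0 ⊆ K := by
      rintro ⟨t, x₁, x'⟩ ⟨ht, ⟨hx1, _⟩, hx'⟩
      have h1 : -(4^2 : ℝ) < t := ht.1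
      have h2 : (0:ℝ) - 4 < x₁ := hx1.1
      have h3 : x₁ < 0 + 4 := hx1.2
      refine ⟨⟨by norm_num at h1 ⊢; linarith, ht.2.le⟩,
        ⟨⟨by linarith, by linarith⟩, ?_⟩⟩
      exact Metric.ball_subset_closedBall hx'
    obtain ⟨M, hM⟩ := hKc.exists_bound_of_continuousOn hD1pC.continuousOn
    rw [hJconv]
    have hb : ∀ z ∈ QPlus d 4 0,
        ENNReal.ofReal (z.2.1 ^ β) * ENNReal.ofReal (|sGrad d u z (1, 0)| ^ p) ≤
        ENNReal.ofReal (z.2.1 ^ β) * ENNReal.ofReal M := by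
      intro z hz
      refine mul_le_mul_right (ENNReal.ofReal_le_ofReal ?_) _
      exact le_trans (le_abs_self _) (hM z (hsubK hz))
    refine ne_top_of_le_ne_top ?_ (setLIntegral_mono' hQ4m hb)
    have heq : (∫⁻ z in QPlus d 4 0, ENNReal.ofReal (z.2.1 ^ β) * ENNReal.ofReal M) =
        (∫⁻ z in QPlus d 4 0, ENNReal.ofReal (z.2.1 ^ β)) * ENNReal.ofReal M :=
      lintegral_mul_const' _ _ ENNReal.ofReal_ne_top
    rw [heq]
    refine ENNReal.mul_ne_top ?_ ENNReal.ofReal_ne_top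
    rw [← withDensity_apply _ hQ4m, ← hwμ]
    exact hwQ4
  -- the Hardy-type inequality : Ilin ≤ CH * Jlin
  have hHardy : Ilin ≤ CH * Jlin := by
    have hupm : Measurable fun z : ℝ × ℝ × EuclideanSpace ℝ (Fin (d - 1)) =>
        ENNReal.ofReal (|u z| ^ p) := hupC.measurable.ennreal_ofReal
    set H : ℝ → EuclideanSpace ℝ (Fin (d - 1)) → ℝ≥0∞ := fun t x' =>
      ∫⁻ s in Set.Ioc (0:ℝ) 4,
        ENNReal.ofReal (|sGrad d u (t, s, x') (1, 0)| ^ p * s ^ β) with hHdef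
    have hpoint : ∀ (t : ℝ) (x' : EuclideanSpace ℝ (Fin (d - 1))), ∀ x₁ ∈ A4,
        ENNReal.ofReal (|u (t, x₁, x')| ^ p) ≤ H t x' * T ^ (p - 1) := by
      intro t x' x₁ hx₁
      have h01 : (0:ℝ) < x₁ := hx₁.2
      have h14 : x₁ ≤ 4 := by have := hx₁.1.2; linarith
      have hD1s : Continuous fun s : ℝ => sGrad d u (t, s, x') (1, 0) :=
        hD1c.comp (continuous_const.prodMk (continuous_id.prodMk continuous_const))
      have hftc : u (t, x₁, x') = ∫ s in (0:ℝ)..x₁, sGrad d u (t, s, x') (1, 0) := by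
        have h := intervalIntegral.integral_eq_sub_of_hasDerivAt
          (f := fun s => u (t, s, x')) (f' := fun s => sGrad d u (t, s, x') (1, 0))
          (fun s _ => hasDerivAt_D1 hu t x' s) (hD1s.intervalIntegrable 0 x₁)
        beta_reduce at h
        rw [h, hu0 t x', sub_zero]
      rw [hftc]
      have hres := holder_bound (β := β) hp hD1s h01 h14
      rw [← hδdef, ← hTdef] at hres
      exact hres
    rw [hIlindef, hQ4eq, lint3 _ hupm]
    have hstep1 : ∀ t : ℝ, (∫⁻ x₁ in A4, ∫⁻ x' in B4, ENNReal.ofReal (|u (t, x₁, x')| ^ p)) ≤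
        (∫⁻ x' in B4, H t x') * (T ^ (p - 1) * volume A4) := by
      intro t
      calc (∫⁻ x₁ in A4, ∫⁻ x' in B4, ENNReal.ofReal (|u (t, x₁, x')| ^ p))
          ≤ ∫⁻ x₁ in A4, ∫⁻ x' in B4, H t x' * T ^ (p - 1) := by
            refine setLIntegral_mono' hA4m fun x₁ hx₁ => ?_
            exact lintegral_mono fun x' => hpoint t x' x₁ hx₁
        _ = ∫⁻ x₁ in A4, (∫⁻ x' in B4, H t x') * T ^ (p - 1) :=
            lintegral_congr fun x₁ => lintegral_mul_const' _ _ hTp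
        _ = (∫⁻ x' in B4, H t x') * T ^ (p - 1) * volume A4 := setLIntegral_const _ _
        _ = (∫⁻ x' in B4, H t x') * (T ^ (p - 1) * volume A4) := by ring
    refine le_trans (lintegral_mono fun t => hstep1 t) ?_
    rw [lintegral_mul_const' _ _
      (ENNReal.mul_ne_top hTp (lt_of_le_of_lt hA4fin (by norm_num)).ne)]
    have hres : (volume : Measure ℝ).restrict A4 = volume.restrict (Set.Ioc (0:ℝ) 4) := by
      rw [hA4Ioo]
      exact Measure.restrict_congr_set Ioo_ae_eq_Ioc
    have hswap : ∀ t : ℝ, (∫⁻ x' in B4, H t x') =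
        ∫⁻ s in Set.Ioc (0:ℝ) 4, ∫⁻ x' in B4,
          ENNReal.ofReal (|sGrad d u (t, s, x') (1, 0)| ^ p * s ^ β) := by
      intro t
      rw [hHdef]
      refine lintegral_lintegral_swap ?_
      refine Measurable.aemeasurable ?_
      have hc : Continuous fun q : EuclideanSpace ℝ (Fin (d - 1)) × ℝ =>
          |sGrad d u (t, q.2, q.1) (1, 0)| ^ p :=
        ((hD1c.comp (continuous_const.prodMk
          (continuous_snd.prodMk continuous_fst))).abs).rpow_const (fun _ => Or.inr hp0.le)
      exact (hc.measurable.mul (measurable_snd.pow_const β)).ennreal_ofReal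
    have hW : (∫⁻ t in S4, ∫⁻ x' in B4, H t x') = Jlin := by
      rw [hJconv, hQ4eq, lint3 (fun z => ENNReal.ofReal (z.2.1 ^ β) * ENNReal.ofReal (|sGrad d u z (1, 0)| ^ p)) (hw.mul hD1pm)]
      refine lintegral_congr fun t => ?_
      rw [hswap t, hres]
      refine lintegral_congr fun s => lintegral_congr fun x' => ?_
      rw [ENNReal.ofReal_mul (Real.rpow_nonneg (abs_nonneg _) p), mul_comm]
    rw [hW]
    calc Jlin * (T ^ (p - 1) * volume A4) ≤ Jlin * (T ^ (p - 1) * 8) := by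
          gcongr
      _ = CH * Jlin := by rw [hCHdef]; ring
  have hIJ : I ≤ CH.toReal * J := by
    rw [hIlin, hJlin, ← ENNReal.toReal_mul]
    exact ENNReal.toReal_mono (ENNReal.mul_ne_top hCH hJfin) hHardy
  -- Step B : oscillation bound
  have hA0n : (0:ℝ) ≤ I ^ (1/p) := Real.rpow_nonneg hI0 _
  have hosc : ∀ X ∈ QPlus d r y₁, ∀ Y ∈ QPlus d r y₁,
      ‖sGrad d u X - sGrad d u Y‖ ≤ C₁ * I ^ (1/p) * (3 * r ^ α) := by
    intro X hX Y hY
    refine le_trans (hO X (hQrQ2 hX) Y (hQrQ2 hY)) ?_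
    have hXt := hX.1
    have hYt := hY.1
    have h1 : |X.1 - Y.1| ^ (α/2) ≤ r ^ α := by
      have habs : |X.1 - Y.1| ≤ r^2 := by
        rw [abs_sub_le_iff]
        constructor <;> [skip; skip] <;>
          [linarith [hXt.1, hXt.2, hYt.1, hYt.2]; linarith [hXt.1, hXt.2, hYt.1, hYt.2]]
      calc |X.1 - Y.1| ^ (α/2) ≤ (r^2) ^ (α/2) :=
            Real.rpow_le_rpow (abs_nonneg _) habs (by linarith)
        _ = r ^ α := by
            rw [← Real.rpow_natCast r 2, ← Real.rpow_mul hr0.le]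
            congr 1
            push_cast
            ring
    have h2 : dist X.2 Y.2 ^ α ≤ 2 * r ^ α := by
      have hd : dist X.2 Y.2 ≤ 2 * r := by
        rw [Prod.dist_eq, max_le_iff]
        constructor
        · rw [Real.dist_eq, abs_sub_le_iff]
          have h1 := hX.2.1.1.1
          have h2 := hX.2.1.1.2
          have h3 := hY.2.1.1.1
          have h4 := hY.2.1.1.2
          constructor <;> linarith
        · have h1 : dist X.2.2 (0 : EuclideanSpace ℝ (Fin (d - 1))) < r :=
            Metric.mem_ball.mp hX.2.2
          have h2 : dist Y.2.2 (0 : EuclideanSpace ℝ (Fin (d - 1))) < r :=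
            Metric.mem_ball.mp hY.2.2
          calc dist X.2.2 Y.2.2 ≤ dist X.2.2 0 + dist (0 : EuclideanSpace ℝ (Fin (d - 1))) Y.2.2 :=
                dist_triangle _ _ _
            _ ≤ 2 * r := by rw [dist_comm (0 : EuclideanSpace ℝ (Fin (d - 1))) Y.2.2]; linarith
      calc dist X.2 Y.2 ^ α ≤ (2*r) ^ α := Real.rpow_le_rpow dist_nonneg hd hα0.le
        _ = 2 ^ α * r ^ α := Real.mul_rpow (by norm_num) hr0.le
        _ ≤ 2 * r ^ α := by
            have h2a : (2:ℝ) ^ α ≤ 2 ^ (1:ℝ) :=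
              Real.rpow_le_rpow_of_exponent_le one_le_two hα1.le
            rw [Real.rpow_one] at h2a
            exact mul_le_mul_of_nonneg_right h2a (Real.rpow_nonneg hr0.le _)
    have hsum : |X.1 - Y.1| ^ (α/2) + dist X.2 Y.2 ^ α ≤ 3 * r ^ α := by linarith
    exact mul_le_mul_of_nonneg_left hsum (mul_nonneg hC₁ hA0n)
  set m := ⨍ w in QPlus d r y₁, sGrad d u w ∂(wμ d θ) with hm
  by_cases hz : wμ d θ (QPlus d r y₁) = 0
  · rw [setAverage_eq, Measure.restrict_eq_zero.mpr hz, integral_zero_measure, smul_zero]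
    have : (0:ℝ) ≤ (3 ^ p * C₁ ^ p * CH.toReal + 1) * r ^ (α * p) * J := by positivity
    exact this
  · have hV : 0 < (wμ d θ (QPlus d r y₁)).toReal := ENNReal.toReal_pos hz hwQr
    set V : ℝ := (wμ d θ (QPlus d r y₁)).toReal with hVdef
    haveI hfinm : IsFiniteMeasure ((wμ d θ).restrict (QPlus d r y₁)) := by
      constructor
      rw [Measure.restrict_apply_univ]
      exact lt_top_iff_ne_top.mpr hwQr
    have hsm : AEStronglyMeasurable (sGrad d u) ((wμ d θ).restrict (QPlus d r y₁)) :=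
      (sGrad_cont hu).aestronglyMeasurable.restrict
    have hgi : Integrable (sGrad d u) ((wμ d θ).restrict (QPlus d r y₁)) := by
      refine Integrable.mono' (integrable_const (C₁ * I ^ (1/p))) hsm ?_
      exact (ae_restrict_iff' (hQmeas r y₁)).mpr
        (Filter.Eventually.of_forall fun z hz' => hB z (hQrQ2 hz'))
    have hmz : ∀ z ∈ QPlus d r y₁, ‖sGrad d u z - m‖ ≤ C₁ * I ^ (1/p) * (3 * r ^ α) := by
      intro z hzz
      have hrw : V⁻¹ • (∫ w in QPlus d r y₁, (sGrad d u z - sGrad d u w) ∂(wμ d θ)) =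
          sGrad d u z - m := by
        rw [integral_sub (integrable_const _) hgi, setIntegral_const, measureReal_def, smul_sub, smul_smul,
          ← hVdef, inv_mul_cancel₀ hV.ne', one_smul, hm, setAverage_eq, measureReal_def, ← hVdef]
      rw [← hrw, norm_smul]
      have hn : ‖∫ w in QPlus d r y₁, (sGrad d u z - sGrad d u w) ∂(wμ d θ)‖ ≤
          (C₁ * I ^ (1/p) * (3 * r ^ α)) * V := by
        refine norm_setIntegral_le_of_norm_le_const_ae (lt_top_iff_ne_top.mpr hwQr) ?_
        exact (ae_restrict_iff' (hQmeas r y₁)).mpr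
          (Filter.Eventually.of_forall fun w hw' => hosc z hzz w hw')
      have hnorm : ‖V⁻¹‖ = V⁻¹ := by
        rw [Real.norm_eq_abs, abs_of_pos (inv_pos.mpr hV)]
      rw [hnorm]
      calc V⁻¹ * ‖∫ w in QPlus d r y₁, (sGrad d u z - sGrad d u w) ∂(wμ d θ)‖
          ≤ V⁻¹ * ((C₁ * I ^ (1/p) * (3 * r ^ α)) * V) :=
            mul_le_mul_of_nonneg_left hn (inv_nonneg.mpr hV.le)
        _ = C₁ * I ^ (1/p) * (3 * r ^ α) := by
            field_simp
    have hfc : Continuous fun z : ℝ × ℝ × EuclideanSpace ℝ (Fin (d - 1)) =>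
        ‖sGrad d u z - m‖ ^ p :=
      (((sGrad_cont hu).sub continuous_const).norm).rpow_const (fun _ => Or.inr hp0.le)
    have hfi : Integrable (fun z => ‖sGrad d u z - m‖ ^ p)
        ((wμ d θ).restrict (QPlus d r y₁)) := by
      refine Integrable.mono' (integrable_const ((C₁ * I ^ (1/p) * (3 * r ^ α)) ^ p))
        hfc.aestronglyMeasurable.restrict ?_
      refine (ae_restrict_iff' (hQmeas r y₁)).mpr
        (Filter.Eventually.of_forall fun z hzz => ?_)
      rw [Real.norm_eq_abs, abs_of_nonneg (Real.rpow_nonneg (norm_nonneg _) _)]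
      exact Real.rpow_le_rpow (norm_nonneg _) (hmz z hzz) hp0.le
    have havg : (⨍ z in QPlus d r y₁, ‖sGrad d u z - m‖ ^ p ∂(wμ d θ)) ≤
        (C₁ * I ^ (1/p) * (3 * r ^ α)) ^ p := by
      rw [setAverage_eq, measureReal_def, ← hVdef, smul_eq_mul]
      have h1 : (∫ z in QPlus d r y₁, ‖sGrad d u z - m‖ ^ p ∂(wμ d θ)) ≤
          V * ((C₁ * I ^ (1/p) * (3 * r ^ α)) ^ p) := by
        calc (∫ z in QPlus d r y₁, ‖sGrad d u z - m‖ ^ p ∂(wμ d θ))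
            ≤ ∫ _ in QPlus d r y₁, (C₁ * I ^ (1/p) * (3 * r ^ α)) ^ p ∂(wμ d θ) :=
              setIntegral_mono_on hfi (integrable_const _) (hQmeas r y₁)
                (fun z hzz => Real.rpow_le_rpow (norm_nonneg _) (hmz z hzz) hp0.le)
          _ = V * ((C₁ * I ^ (1/p) * (3 * r ^ α)) ^ p) := by
              rw [setIntegral_const, measureReal_def, smul_eq_mul, ← hVdef]
      calc V⁻¹ * (∫ z in QPlus d r y₁, ‖sGrad d u z - m‖ ^ p ∂(wμ d θ))
          ≤ V⁻¹ * (V * ((C₁ * I ^ (1/p) * (3 * r ^ α)) ^ p)) :=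
            mul_le_mul_of_nonneg_left h1 (inv_nonneg.mpr hV.le)
        _ = (C₁ * I ^ (1/p) * (3 * r ^ α)) ^ p := by field_simp
    refine le_trans havg ?_
    have hMp : (C₁ * I ^ (1/p) * (3 * r ^ α)) ^ p = 3 ^ p * (C₁ ^ p * I) * r ^ (α * p) := by
      rw [Real.mul_rpow (mul_nonneg hC₁ hA0n) (by positivity),
        Real.mul_rpow hC₁ hA0n,
        Real.mul_rpow (by norm_num : (0:ℝ) ≤ 3) (Real.rpow_nonneg hr0.le _),
        ← Real.rpow_mul hr0.le,
        show (I ^ (1/p)) ^ p = I by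
          rw [← Real.rpow_mul hI0, one_div, inv_mul_cancel₀ hp0.ne', Real.rpow_one]]
      ring
    rw [hMp]
    have hrp : (0:ℝ) ≤ r ^ (α * p) := Real.rpow_nonneg hr0.le _
    calc 3 ^ p * (C₁ ^ p * I) * r ^ (α * p)
        ≤ 3 ^ p * (C₁ ^ p * (CH.toReal * J)) * r ^ (α * p) := by
          gcongr
      _ = (3 ^ p * C₁ ^ p * CH.toReal) * r ^ (α * p) * J := by ring
      _ ≤ (3 ^ p * C₁ ^ p * CH.toReal + 1) * r ^ (α * p) * J := by
          have hnn : (0:ℝ) ≤ r ^ (α * p) * J := mul_nonneg hrp hJ0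
          nlinarith

end
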